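/- The Fibonacci word v satisfies v = v₊^R 1 0 v₊, i.e. for the rotation sequence with α = (√5−1)/2: v_{−1} = 1, v_0 = 0, and the reflection about position −1/2 shifted by one maps the positive part onto the negative part; consequently the set of finite subwords of v is closed under reversal. -/

import Mathlib

/-!
Rewriting the coding as `v n = ⌊(n + 1) α⌋ - ⌊n α⌋` (the lower mechanical word of slope `α`), the
reflection `n ↦ -1 - n` turns it into `⌈(n + 1) α⌉ - ⌈n α⌉`, which agrees with the floor version
unless `n α` or `(n + 1) α` is an integer, i.e. unless `n ∈ {0, -1}`. So a factor of `v` lying at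
positive positions has its reversal at negative ones. Every factor does occur at positive positions:
`F (2m+1) α = F (2m) + α ^ (2m+1)`, so a shift by the Fibonacci number `F (2m+1)` moves each phase
`n α` to the right by `α ^ (2m+1) → 0`, and `⌊·⌋` is right-continuous.
-/

noncomputable def alpha : ℝ := (Real.sqrt 5 - 1) / 2

noncomputable def v (n : ℤ) : ℕ :=
  if Int.fract ((n : ℝ) * alpha) ∈ Set.Ico (1 - alpha) 1 then 1 else 0

def Occurs (u : ℤ → ℕ) (w : List ℕ) : Prop :=
  ∃ k : ℤ, ∀ i : ℕ, i < w.length → u (k + i) = w.getD i 0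

open Filter Topology Set Real goldenRatio

section FloorRing

variable {R : Type*} [CommRing R] [LinearOrder R] [IsStrictOrderedRing R] [FloorRing R]

theorem Int.ceil_sub_ceil_eq_floor_sub_floor {x y : R} (hx : x ∉ Set.range Int.cast)
    (hy : y ∉ Set.range Int.cast) : ⌈y⌉ - ⌈x⌉ = ⌊y⌋ - ⌊x⌋ := by
  rw [(Int.ceil_eq_floor_add_one_iff_notMem x).2 hx, (Int.ceil_eq_floor_add_one_iff_notMem y).2 hy]
  ring

theorem ite_fract_mem_Ico_eq_floor_add_sub_floor {θ : R} (h0 : 0 ≤ θ) (h1 : θ ≤ 1) (x : R) :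
    ((if Int.fract x ∈ Ico (1 - θ) 1 then 1 else 0 : ℕ) : ℤ) = ⌊x + θ⌋ - ⌊x⌋ := by
  have hsplit : ⌊x + θ⌋ = ⌊Int.fract x + θ⌋ + ⌊x⌋ := by
    rw [← Int.floor_add_intCast, Int.fract]
    congr 1
    abel
  have hf0 := Int.fract_nonneg x
  have hf1 := Int.fract_lt_one x
  rw [hsplit, add_sub_cancel_right]
  split_ifs with h
  · rw [eq_comm, Int.floor_eq_iff]
    push_cast
    constructor <;> linarith [h.1]
  · rw [eq_comm, Int.floor_eq_iff]
    have : Int.fract x < 1 - θ := by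
      by_contra! h'
      exact h ⟨h', hf1⟩
    push_cast
    constructor <;> linarith

variable [TopologicalSpace R] [OrderTopology R] [ContinuousAdd R]

theorem eventually_floor_add_eq {ι : Type*} {l : Filter ι} {t : ι → R} (ht : Tendsto t l (𝓝[≥] 0))
    (y : R) : ∀ᶠ i in l, ⌊y + t i⌋ = ⌊y⌋ := by
  obtain ⟨ht0, ht_nonneg⟩ := tendsto_nhdsWithin_iff.1 ht
  have hy : Tendsto (fun i => y + t i) l (𝓝[≥] y) := by
    refine tendsto_nhdsWithin_iff.2 ⟨?_, ht_nonneg.mono fun i hi => le_add_of_nonneg_right hi⟩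
    simpa using tendsto_const_nhds.add ht0
  exact tendsto_pure.1 ((tendsto_floor_right_pure_floor y).comp hy)

end FloorRing

theorem alpha_eq_neg_goldenConj : alpha = -ψ := by
  unfold alpha goldenConj
  ring

theorem alpha_pos : 0 < alpha := by
  rw [alpha_eq_neg_goldenConj]
  exact neg_pos.2 goldenConj_neg

theorem alpha_lt_one : alpha < 1 := by
  rw [alpha_eq_neg_goldenConj]
  linarith [neg_one_lt_goldenConj]

theorem irrational_alpha : Irrational alpha := by
  rw [alpha_eq_neg_goldenConj]
  exact goldenConj_irrational.neg

theorem intCast_mul_alpha_notMem_range {m : ℤ} (hm : m ≠ 0) :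
    (m : ℝ) * alpha ∉ Set.range Int.cast := by
  rintro ⟨z, hz⟩
  exact (irrational_alpha.intCast_mul hm).ne_int z hz.symm

theorem v_eq_floor_sub_floor (n : ℤ) :
    (v n : ℤ) = ⌊(n : ℝ) * alpha + alpha⌋ - ⌊(n : ℝ) * alpha⌋ :=
  ite_fract_mem_Ico_eq_floor_add_sub_floor alpha_pos.le alpha_lt_one.le _

theorem v_neg_one : v (-1) = 1 := by
  have h : ⌊-alpha⌋ = -1 := by
    rw [Int.floor_eq_iff]
    push_cast
    constructor <;> linarith [alpha_pos, alpha_lt_one]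
  have : (v (-1) : ℤ) = 1 := by
    rw [v_eq_floor_sub_floor]
    push_cast
    rw [neg_one_mul, neg_add_cancel, h, Int.floor_zero]
    rfl
  exact_mod_cast this

theorem v_zero : v 0 = 0 := by
  have : (v 0 : ℤ) = 0 := by
    rw [v_eq_floor_sub_floor]
    simp [Int.floor_eq_zero_iff, alpha_pos.le, alpha_lt_one]
  exact_mod_cast this

theorem v_neg_one_sub {n : ℤ} (hn₁ : n ≠ -1) (hn₀ : n ≠ 0) : v (-1 - n) = v n := by
  have hx := intCast_mul_alpha_notMem_range hn₀
  have hy : (n : ℝ) * alpha + alpha ∉ Set.range Int.cast := by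
    simpa [add_mul] using intCast_mul_alpha_notMem_range (show n + 1 ≠ 0 by omega)
  have e₁ : ((-1 - n : ℤ) : ℝ) * alpha + alpha = -((n : ℝ) * alpha) := by push_cast; ring
  have e₂ : ((-1 - n : ℤ) : ℝ) * alpha = -((n : ℝ) * alpha + alpha) := by push_cast; ring
  have : (v (-1 - n) : ℤ) = v n := by
    rw [v_eq_floor_sub_floor, v_eq_floor_sub_floor, e₁, e₂, Int.floor_neg, Int.floor_neg,
      ← Int.ceil_sub_ceil_eq_floor_sub_floor hx hy]
    ring
  exact_mod_cast this

theorem fib_odd_mul_alpha (m : ℕ) :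
    (Nat.fib (2 * m + 1) : ℝ) * alpha = Nat.fib (2 * m) + alpha ^ (2 * m + 1) := by
  have h := goldenConj_mul_fib_succ_add_fib (2 * m)
  rw [← neg_neg ψ, ← alpha_eq_neg_goldenConj, Odd.neg_pow (⟨m, rfl⟩ : Odd (2 * m + 1))] at h
  linarith

theorem tendsto_alpha_pow_odd : Tendsto (fun m : ℕ => alpha ^ (2 * m + 1)) atTop (𝓝[≥] 0) := by
  refine tendsto_nhdsWithin_iff.2 ⟨?_, Eventually.of_forall fun m => pow_nonneg alpha_pos.le _⟩
  exact (tendsto_pow_atTop_nhds_zero_of_lt_one alpha_pos.le alpha_lt_one).comp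
    (tendsto_atTop_mono (fun m => by simp only [id]; omega) tendsto_id)

theorem v_add_fib_odd (n : ℤ) (m : ℕ) : (v (n + Nat.fib (2 * m + 1)) : ℤ) =
    ⌊(n : ℝ) * alpha + alpha + alpha ^ (2 * m + 1)⌋ - ⌊(n : ℝ) * alpha + alpha ^ (2 * m + 1)⌋ := by
  have h : ((n + Nat.fib (2 * m + 1) : ℤ) : ℝ) * alpha =
      (n : ℝ) * alpha + alpha ^ (2 * m + 1) + Nat.fib (2 * m) := by
    push_cast
    rw [add_mul, fib_odd_mul_alpha]
    ring
  rw [v_eq_floor_sub_floor, h, add_right_comm _ (Nat.fib _ : ℝ), add_right_comm _ (alpha ^ _),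
    Int.floor_add_natCast, Int.floor_add_natCast, add_sub_add_right_eq_sub]

theorem eventually_v_add_fib_odd_eq (n : ℤ) : ∀ᶠ m in atTop, v (n + Nat.fib (2 * m + 1)) = v n := by
  filter_upwards [eventually_floor_add_eq tendsto_alpha_pow_odd ((n : ℝ) * alpha + alpha),
    eventually_floor_add_eq tendsto_alpha_pow_odd ((n : ℝ) * alpha)] with m h₁ h₂
  have : (v (n + Nat.fib (2 * m + 1)) : ℤ) = v n := by
    rw [v_add_fib_odd, v_eq_floor_sub_floor, h₁, h₂]
  exact_mod_cast this

theorem exists_one_le_window_eq (k : ℤ) (L : ℕ) :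
    ∃ K : ℤ, 1 ≤ K ∧ ∀ i < L, v (K + i) = v (k + i) := by
  have hwindow : ∀ᶠ m in atTop, ∀ i ∈ Finset.range L, v (k + i + Nat.fib (2 * m + 1)) = v (k + i) :=
    (eventually_all_finset _).2 fun i _ => eventually_v_add_fib_odd_eq _
  obtain ⟨m, hm, hmk⟩ := (hwindow.and (eventually_ge_atTop (1 - k).toNat)).exists
  refine ⟨k + Nat.fib (2 * m + 1), ?_, fun i hi => ?_⟩
  · have := Nat.le_fib_add_one (2 * m + 1)
    omega
  · rw [add_right_comm]
    exact hm i (Finset.mem_range.2 hi)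

theorem occurs_v_reverse {w : List ℕ} (hw : Occurs v w) : Occurs v w.reverse := by
  obtain ⟨k, hk⟩ := hw
  obtain ⟨K, hK, hKk⟩ := exists_one_le_window_eq k w.length
  refine ⟨-K - w.length, fun i hi => ?_⟩
  rw [List.length_reverse] at hi
  have hj : w.length - 1 - i < w.length := by omega
  have hindex : -K - w.length + i = -1 - (K + ↑(w.length - 1 - i)) := by omega
  rw [hindex, v_neg_one_sub (by omega) (by omega), hKk _ hj, hk _ hj, List.getD_eq_getElem _ _ hj,
    List.getD_eq_getElem _ _ (by simpa using hi), List.getElem_reverse]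

theorem fibonacci_reflection_symmetry :
    v (-1) = 1 ∧ v 0 = 0 ∧ (∀ n : ℤ, n ≠ -1 → n ≠ 0 → v n = v (-1 - n)) ∧
    ∀ w : List ℕ, Occurs v w → Occurs v w.reverse :=
  ⟨v_neg_one, v_zero, fun _ hn₁ hn₀ => (v_neg_one_sub hn₁ hn₀).symm, fun _ => occurs_v_reverse⟩
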